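/- Let G be a multigraph whose vertex set is partitioned as V₁ ⊔ S ⊔ V₂, with S = {u₁,u₂,u₃}, |V₁| odd, and no edges between V₁ and V₂. Then every perfect matching of G is of exactly one of four types: (Type 0) all three vertices of S matched to vertices of V₁, and the rest of the matching is a perfect matching of G[V₂]; (Type i, for i = 1,2,3) u_i matched to a vertex of V₁, and the remaining matching restricted to V₂ ∪ (S∖{u_i}) is a perfect matching of G[V₂ ∪ (S∖{u_i})]. Consequently, for any vertex colouring vc, its weight decomposes as w(vc) = Σ_{i=0}^{3} W_i(vc)·W_i'(vc), where W_i and W_i' are the weights of the restricted colourings on the two sides. -/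

import Mathlib

open scoped Classical

/-- An edge-coloured edge-weighted multigraph (no self-loops) on vertex set `V`.
Each edge `e` has two endpoints `fst e`, `snd e`, a colour on each of its two
half-edges (`cf e` at `fst e`, `cs e` at `snd e`) and a complex weight `w e`. -/
structure EMG (V : Type) [Fintype V] [DecidableEq V] where
  E : Type
  [fintypeE : Fintype E]
  fst : E → V
  snd : E → V
  noLoop : ∀ e, fst e ≠ snd e
  cf : E → ℕ
  cs : E → ℕ
  w : E → ℂ

namespace EMG

attribute [instance] EMG.fintypeE

variable {V : Type} [Fintype V] [DecidableEq V] (G : EMG V)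

/-- `e` is incident to vertex `x`. -/
def inc (e : G.E) (x : V) : Prop := G.fst e = x ∨ G.snd e = x

/-- `M` is a perfect matching of the induced subgraph on `S`: all edges of `M`
lie inside `S` and every vertex of `S` is covered exactly once. -/
def IsPMOn (S : Finset V) (M : Finset G.E) : Prop :=
  (∀ e ∈ M, G.fst e ∈ S ∧ G.snd e ∈ S) ∧ ∀ x ∈ S, ∃! e, e ∈ M ∧ G.inc e x

/-- `M` is a perfect matching of `G`. -/
def IsPM (M : Finset G.E) : Prop := G.IsPMOn Finset.univ M

/-- `M` induces the vertex colouring `vc`: every edge of `M` survives the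
filtering by `vc` (half-edge colours agree with the endpoint colours). -/
def Induces (M : Finset G.E) (vc : V → ℕ) : Prop :=
  ∀ e ∈ M, G.cf e = vc (G.fst e) ∧ G.cs e = vc (G.snd e)

/-- The weight of the vertex colouring `vc` on the induced subgraph on `S`:
the sum over perfect matchings of the filtered subgraph of the products of
edge weights. -/
noncomputable def wcolOn (S : Finset V) (vc : V → ℕ) : ℂ :=
  ∑ M ∈ Finset.univ.filter (fun M => G.IsPMOn S M ∧ G.Induces M vc),
    ∏ e ∈ M, G.w e

/-- The weight of the vertex colouring `vc` in `G`. -/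
noncomputable def wcol (vc : V → ℕ) : ℂ := G.wcolOn Finset.univ vc

/-- `vc` is feasible: the subgraph filtered by `vc` has a perfect matching. -/
def Feasible (vc : V → ℕ) : Prop := ∃ M, G.IsPM M ∧ G.Induces M vc

/-- `G` is a GHZ graph: all feasible monochromatic vertex colourings have
weight `1` and all non-monochromatic vertex colourings have weight `0`. -/
def IsGHZ : Prop :=
  (∀ i : ℕ, G.Feasible (fun _ => i) → G.wcol (fun _ => i) = 1) ∧
  (∀ vc : V → ℕ, (¬ ∃ i : ℕ, ∀ x, vc x = i) → G.wcol vc = 0)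

/-- `G` is a g-GHZ graph: all feasible monochromatic vertex colourings have
non-zero weight and all non-monochromatic vertex colourings have weight `0`. -/
def IsgGHZ : Prop :=
  (∀ i : ℕ, G.Feasible (fun _ => i) → G.wcol (fun _ => i) ≠ 0) ∧
  (∀ vc : V → ℕ, (¬ ∃ i : ℕ, ∀ x, vc x = i) → G.wcol vc = 0)

/-- The dimension: the number of feasible monochromatic vertex colourings. -/
noncomputable def dimension : ℕ := Set.ncard {i : ℕ | G.Feasible (fun _ => i)}

/-- The skeleton of `G`: its underlying simple graph. -/
def skeleton : SimpleGraph V where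
  Adj a b := a ≠ b ∧ ∃ e : G.E, (G.fst e = a ∧ G.snd e = b) ∨ (G.fst e = b ∧ G.snd e = a)
  symm := by
    constructor
    intro a b h
    refine ⟨h.1.symm, ?_⟩
    obtain ⟨e, he⟩ := h.2
    exact ⟨e, he.symm⟩
  loopless := by constructor; intro a h; exact h.1 rfl

/-- Replace the weight function of `G`. -/
def reweight (w' : G.E → ℂ) : EMG V := { G with w := w' }

/-- Delete the edges in `D` from `G`. -/
noncomputable def deleteEdges (D : Finset G.E) : EMG V where
  E := {e : G.E // e ∉ D}
  fst e := G.fst e.1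
  snd e := G.snd e.1
  noLoop e := G.noLoop e.1
  cf e := G.cf e.1
  cs e := G.cs e.1
  w e := G.w e.1

/-- `M` is a monochromatic perfect matching of colour `i` (as a set of coloured
edges: all half-edges of `M` carry colour `i`). -/
def MonoPM (M : Finset G.E) (i : ℕ) : Prop :=
  ∀ e ∈ M, G.cf e = i ∧ G.cs e = i

/-- Both endpoints of `e` lie in `S`. -/
def bothIn (S : Finset V) (e : G.E) : Prop := G.fst e ∈ S ∧ G.snd e ∈ S

/-- `e` joins a vertex of `S` to the vertex `x`. -/
def connectsTo (S : Finset V) (x : V) (e : G.E) : Prop :=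
  (G.fst e ∈ S ∧ G.snd e = x) ∨ (G.snd e ∈ S ∧ G.fst e = x)

end EMG

/-- The matching index of a simple graph `H`: the maximum dimension over all
GHZ edge-coloured edge-weighted multigraphs whose skeleton is `H`. -/
noncomputable def matchingIndex {V : Type} [Fintype V] [DecidableEq V]
    (H : SimpleGraph V) : ℕ :=
  sSup {d : ℕ | ∃ G : EMG V, G.skeleton = H ∧ G.IsGHZ ∧ G.dimension = d}

/-! Let `T(M) = G.matchedInto M V₁ \ V₁` be the set of vertices outside `V₁` that the perfect
matching `M` matches into `V₁`. Then `V₁ ∪ T(M)` is closed under `M`, so `M` restricts to a perfect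
matching of it and `|V₁| + |T(M)|` is even. As there are no `V₁`–`V₂` edges, `T(M) ⊆ S`, so `T(M)`
is either `S = {u₁, u₂, u₃}` or a singleton `{uᵢ}`, and these four values of `T(M)` are exactly the
four types. A perfect matching with `T(M) = T` is the disjoint union of a perfect matching of
`V₁ ∪ T` with no edge inside `T` and one of the rest of the graph, which factors the weight. -/

lemma Finset.eq_triple_or_eq_singleton_of_odd_card {α : Type*} [DecidableEq α] {s : Finset α}
    {a b c : α} (hs : s ⊆ {a, b, c}) (hodd : Odd s.card) :
    s = {a, b, c} ∨ s = {a} ∨ s = {b} ∨ s = {c} := by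
  have h3 : s.card ≤ 3 := (Finset.card_le_card hs).trans Finset.card_le_three
  obtain ⟨k, hk⟩ := hodd
  rcases (by omega : s.card = 1 ∨ s.card = 3) with h | h
  · obtain ⟨x, rfl⟩ := Finset.card_eq_one.1 h
    right
    simpa using hs
  · exact Or.inl (Finset.eq_of_subset_of_card_le hs (h ▸ Finset.card_le_three))

lemma Finset.injective_triple_singletons {α : Type*} [DecidableEq α] {a b c : α} (hab : a ≠ b)
    (hac : a ≠ c) (hbc : b ≠ c) : (![{a, b, c}, {a}, {b}, {c}] : Fin 4 → Finset α).Injective := by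
  intro i j h
  have h' := h.symm
  fin_cases i <;> fin_cases j <;> simp [Finset.eq_singleton_iff_unique_mem] at h h' ⊢ <;> grind

lemma Finset.sum_fiberwise_of_injective {ι κ α β : Type*} [Fintype ι] [DecidableEq κ]
    [AddCommMonoid β] {s : Finset α} {g : α → κ} {f : ι → κ} (hf : f.Injective)
    (hg : ∀ x ∈ s, ∃ i, g x = f i) (F : α → β) :
    ∑ i, ∑ x ∈ s with g x = f i, F x = ∑ x ∈ s, F x := by
  rw [← Finset.sum_fiberwise_of_maps_to (t := Finset.univ.image f) (g := g) fun x hx => ?_,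
    Finset.sum_image fun i _ j _ h => hf h]
  obtain ⟨i, hi⟩ := hg x hx
  exact Finset.mem_image.2 ⟨i, Finset.mem_univ i, hi.symm⟩

namespace EMG

variable {V : Type} [Fintype V] [DecidableEq V] {G : EMG V} {M : Finset G.E}

lemma connectsTo.inc {A : Finset V} {x : V} {e : G.E} (h : G.connectsTo A x e) : G.inc e x := by
  rcases h with ⟨_, h⟩ | ⟨_, h⟩
  exacts [Or.inr h, Or.inl h]

lemma connectsTo_fst_iff {A : Finset V} {e : G.E} : G.connectsTo A (G.fst e) e ↔ G.snd e ∈ A := by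
  have := G.noLoop e
  unfold connectsTo
  grind

lemma connectsTo_snd_iff {A : Finset V} {e : G.E} : G.connectsTo A (G.snd e) e ↔ G.fst e ∈ A := by
  have := G.noLoop e
  unfold connectsTo
  grind

lemma not_bothIn_singleton (a : V) (e : G.E) : ¬ G.bothIn {a} e := fun ⟨h₁, h₂⟩ =>
  G.noLoop e ((Finset.mem_singleton.1 h₁).trans (Finset.mem_singleton.1 h₂).symm)

lemma bothIn_of_inc {A B : Finset V} (hAB : Disjoint A B) {e : G.E}
    (h : G.bothIn A e ∨ G.bothIn B e) {x : V} (hx : x ∈ A) (hex : G.inc e x) : G.bothIn A e :=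
  h.resolve_right fun hB =>
    Finset.disjoint_left.1 hAB hx (by rcases hex with rfl | rfl; exacts [hB.1, hB.2])

lemma IsPMOn.eq_of_inc {Y : Finset V} (hM : G.IsPMOn Y M) {x : V} (hx : x ∈ Y)
    {e e' : G.E} (he : e ∈ M) (he' : e' ∈ M) (hex : G.inc e x) (hex' : G.inc e' x) : e = e' :=
  (hM.2 x hx).unique ⟨he, hex⟩ ⟨he', hex'⟩

lemma IsPMOn.even_card {X : Finset V} (hM : G.IsPMOn X M) : Even X.card := by
  have hX : X = M.biUnion fun e => ({G.fst e, G.snd e} : Finset V) := by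
    ext x
    simp only [Finset.mem_biUnion, Finset.mem_insert, Finset.mem_singleton]
    constructor
    · intro hx
      obtain ⟨e, ⟨he, hex⟩, -⟩ := hM.2 x hx
      exact ⟨e, he, hex.imp Eq.symm Eq.symm⟩
    · rintro ⟨e, he, rfl | rfl⟩
      exacts [(hM.1 e he).1, (hM.1 e he).2]
  have hdisj : (M : Set G.E).PairwiseDisjoint fun e => ({G.fst e, G.snd e} : Finset V) := by
    intro e he e' he' hne
    simp only [Function.onFun, Finset.disjoint_left, Finset.mem_insert, Finset.mem_singleton]
    rintro x hx hx'
    have hxX : x ∈ X := by rcases hx with rfl | rfl; exacts [(hM.1 e he).1, (hM.1 e he).2]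
    exact hne (hM.eq_of_inc hxX he he' (hx.imp Eq.symm Eq.symm) (hx'.imp Eq.symm Eq.symm))
  rw [hX, Finset.card_biUnion hdisj, Finset.sum_const_nat fun e _ => Finset.card_pair (G.noLoop e)]
  exact even_iff_two_dvd.2 (dvd_mul_left 2 _)

lemma IsPMOn.filter_bothIn {X Y : Finset V} (hM : G.IsPMOn Y M) (hXY : X ⊆ Y)
    (hX : ∀ e ∈ M, ∀ x ∈ X, G.inc e x → G.bothIn X e) :
    G.IsPMOn X (M.filter (G.bothIn X)) := by
  refine ⟨fun e he => (Finset.mem_filter.1 he).2, fun x hx => ?_⟩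
  obtain ⟨e, ⟨he, hex⟩, huniq⟩ := hM.2 x (hXY hx)
  exact ⟨e, ⟨Finset.mem_filter.2 ⟨he, hX e he x hx hex⟩, hex⟩,
    fun e' ⟨he', hex'⟩ => huniq e' ⟨(Finset.mem_filter.1 he').1, hex'⟩⟩

lemma IsPMOn.union {A B : Finset V} {M₁ M₂ : Finset G.E} (hAB : Disjoint A B)
    (h₁ : G.IsPMOn A M₁) (h₂ : G.IsPMOn B M₂) : G.IsPMOn (A ∪ B) (M₁ ∪ M₂) := by
  have hB : ∀ e ∈ M₂, ∀ x ∈ A, ¬ G.inc e x := by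
    rintro e he x hx (rfl | rfl)
    exacts [Finset.disjoint_left.1 hAB hx (h₂.1 e he).1,
      Finset.disjoint_left.1 hAB hx (h₂.1 e he).2]
  have hA : ∀ e ∈ M₁, ∀ x ∈ B, ¬ G.inc e x := by
    rintro e he x hx (rfl | rfl)
    exacts [Finset.disjoint_right.1 hAB hx (h₁.1 e he).1,
      Finset.disjoint_right.1 hAB hx (h₁.1 e he).2]
  refine ⟨fun e he => ?_, fun x hx => ?_⟩
  · rcases Finset.mem_union.1 he with he | he
    · exact ⟨Finset.mem_union_left _ (h₁.1 e he).1, Finset.mem_union_left _ (h₁.1 e he).2⟩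
    · exact ⟨Finset.mem_union_right _ (h₂.1 e he).1, Finset.mem_union_right _ (h₂.1 e he).2⟩
  rcases Finset.mem_union.1 hx with hx | hx
  · obtain ⟨e, ⟨he, hex⟩, huniq⟩ := h₁.2 x hx
    refine ⟨e, ⟨Finset.mem_union_left _ he, hex⟩, fun e' ⟨he', hex'⟩ => ?_⟩
    rcases Finset.mem_union.1 he' with he' | he'
    exacts [huniq e' ⟨he', hex'⟩, absurd hex' (hB e' he' x hx)]
  · obtain ⟨e, ⟨he, hex⟩, huniq⟩ := h₂.2 x hx
    refine ⟨e, ⟨Finset.mem_union_right _ he, hex⟩, fun e' ⟨he', hex'⟩ => ?_⟩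
    rcases Finset.mem_union.1 he' with he' | he'
    exacts [absurd hex' (hA e' he' x hx), huniq e' ⟨he', hex'⟩]

lemma IsPMOn.filter_bothIn_union {A B : Finset V} {M₁ M₂ : Finset G.E} (hAB : Disjoint A B)
    (h₁ : G.IsPMOn A M₁) (h₂ : G.IsPMOn B M₂) : (M₁ ∪ M₂).filter (G.bothIn A) = M₁ := by
  rw [Finset.filter_union, Finset.filter_true_of_mem (p := G.bothIn A) h₁.1,
    Finset.filter_false_of_mem fun e he hA => Finset.disjoint_left.1 hAB hA.1 (h₂.1 e he).1,
    Finset.union_empty]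

lemma sum_isPMOn_union {A B : Finset V} (hAB : Disjoint A B) (g : G.E → Prop) [DecidablePred g]
    (hg : ∀ e, G.bothIn B e → g e) (vc : V → ℕ) :
    ∑ M ∈ Finset.univ.filter (fun M : Finset G.E => G.IsPMOn (A ∪ B) M ∧ G.Induces M vc ∧
        (∀ e ∈ M, G.bothIn A e ∨ G.bothIn B e) ∧ ∀ e ∈ M, g e), ∏ e ∈ M, G.w e =
      (∑ M ∈ Finset.univ.filter (fun M : Finset G.E => G.IsPMOn A M ∧ G.Induces M vc ∧
        ∀ e ∈ M, g e), ∏ e ∈ M, G.w e) * G.wcolOn B vc := by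
  rw [wcolOn, Finset.sum_mul_sum, ← Finset.sum_product']
  refine Finset.sum_nbij' (fun M => (M.filter (G.bothIn A), M.filter (G.bothIn B)))
    (fun p => p.1 ∪ p.2) ?_ ?_ ?_ ?_ ?_
  · intro M hM
    obtain ⟨hPM, hind, hsplit, hgM⟩ := (Finset.mem_filter.1 hM).2
    refine Finset.mem_product.2 ⟨Finset.mem_filter.2 ⟨Finset.mem_univ _, ?_⟩,
      Finset.mem_filter.2 ⟨Finset.mem_univ _, ?_⟩⟩
    · exact ⟨hPM.filter_bothIn Finset.subset_union_left
          fun e he x hx hex => bothIn_of_inc hAB (hsplit e he) hx hex,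
        fun e he => hind e (Finset.mem_filter.1 he).1,
        fun e he => hgM e (Finset.mem_filter.1 he).1⟩
    · exact ⟨hPM.filter_bothIn Finset.subset_union_right
          fun e he x hx hex => bothIn_of_inc hAB.symm (hsplit e he).symm hx hex,
        fun e he => hind e (Finset.mem_filter.1 he).1⟩
  · rintro ⟨M₁, M₂⟩ h
    simp only [Finset.mem_filter, Finset.mem_univ, true_and, Finset.mem_product] at h ⊢
    obtain ⟨⟨h₁, hind₁, hg₁⟩, h₂, hind₂⟩ := h
    refine ⟨h₁.union hAB h₂, fun e he => ?_, fun e he => ?_, fun e he => ?_⟩ <;>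
      rcases Finset.mem_union.1 he with he | he
    exacts [hind₁ e he, hind₂ e he, Or.inl (h₁.1 e he), Or.inr (h₂.1 e he), hg₁ e he,
      hg e (h₂.1 e he)]
  · intro M hM
    rw [← Finset.filter_or]
    exact Finset.filter_true_of_mem (Finset.mem_filter.1 hM).2.2.2.1
  · rintro ⟨M₁, M₂⟩ h
    simp only [Finset.mem_filter, Finset.mem_univ, true_and, Finset.mem_product] at h
    obtain ⟨⟨h₁, -, -⟩, h₂, -⟩ := h
    rw [Prod.mk.injEq, h₁.filter_bothIn_union hAB h₂, Finset.union_comm,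
      h₂.filter_bothIn_union hAB.symm h₁]
    exact ⟨rfl, rfl⟩
  · intro M hM
    dsimp only
    rw [← Finset.prod_union (Finset.disjoint_filter.2 fun e _ hA hB =>
      Finset.disjoint_left.1 hAB hA.1 hB.1), ← Finset.filter_or,
      Finset.filter_true_of_mem (Finset.mem_filter.1 hM).2.2.2.1]

noncomputable def matchedInto (M : Finset G.E) (A : Finset V) : Finset V :=
  Finset.univ.filter fun x => ∃ e ∈ M, G.connectsTo A x e

lemma mem_matchedInto {A : Finset V} {x : V} :
    x ∈ G.matchedInto M A ↔ ∃ e ∈ M, G.connectsTo A x e := by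
  simp [matchedInto]

lemma IsPM.connectsTo_of_mem_matchedInto (hM : G.IsPM M) {A : Finset V}
    {x : V} {e : G.E} (he : e ∈ M) (hex : G.inc e x) (hx : x ∈ G.matchedInto M A) :
    G.connectsTo A x e := by
  obtain ⟨e', he', hc⟩ := mem_matchedInto.1 hx
  rwa [hM.eq_of_inc (Finset.mem_univ x) he he' hex hc.inc]

lemma disjoint_matchedInto {A B : Finset V} (M : Finset G.E)
    (hsep : ∀ e : G.E, ¬ (G.fst e ∈ A ∧ G.snd e ∈ B) ∧ ¬ (G.fst e ∈ B ∧ G.snd e ∈ A)) :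
    Disjoint (G.matchedInto M A) B := by
  refine Finset.disjoint_left.2 fun x hx hxB => ?_
  obtain ⟨e, -, ⟨hA, rfl⟩ | ⟨hA, rfl⟩⟩ := mem_matchedInto.1 hx
  exacts [(hsep e).1 ⟨hA, hxB⟩, (hsep e).2 ⟨hxB, hA⟩]

lemma IsPM.bothIn_union_matchedInto (hM : G.IsPM M) {A : Finset V} {e : G.E}
    (he : e ∈ M) {x : V} (hex : G.inc e x) (hx : x ∈ A ∪ G.matchedInto M A) :
    G.bothIn (A ∪ G.matchedInto M A) e := by
  have hfst : G.fst e ∈ A ∪ G.matchedInto M A → G.snd e ∈ A ∪ G.matchedInto M A := by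
    intro h
    rcases Finset.mem_union.1 h with h | h
    · exact Finset.mem_union_right _ (mem_matchedInto.2 ⟨e, he, connectsTo_snd_iff.2 h⟩)
    · exact Finset.mem_union_left _
        (connectsTo_fst_iff.1 (hM.connectsTo_of_mem_matchedInto he (Or.inl rfl) h))
  have hsnd : G.snd e ∈ A ∪ G.matchedInto M A → G.fst e ∈ A ∪ G.matchedInto M A := by
    intro h
    rcases Finset.mem_union.1 h with h | h
    · exact Finset.mem_union_right _ (mem_matchedInto.2 ⟨e, he, connectsTo_fst_iff.2 h⟩)
    · exact Finset.mem_union_left _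
        (connectsTo_snd_iff.1 (hM.connectsTo_of_mem_matchedInto he (Or.inr rfl) h))
  rcases hex with rfl | rfl
  exacts [⟨hx, hfst hx⟩, ⟨hsnd hx, hx⟩]

lemma IsPM.odd_card_matchedInto_sdiff (hM : G.IsPM M) {A : Finset V}
    (hA : Odd A.card) : Odd (G.matchedInto M A \ A).card := by
  have hX := (hM.filter_bothIn (Finset.subset_univ (A ∪ G.matchedInto M A))
    fun e he x hx hex => hM.bothIn_union_matchedInto he hex hx).even_card
  rw [← Finset.union_sdiff_self_eq_union, Finset.card_union_of_disjoint Finset.disjoint_sdiff,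
    Nat.even_add] at hX
  rw [← Nat.not_even_iff_odd] at hA ⊢
  exact fun h => hA (hX.2 h)

section Cut

variable {V₁ C B : Finset V}

lemma IsPM.matchedInto_sdiff_eq_iff (hM : G.IsPM M) (hV₁C : Disjoint V₁ C)
    (hAB : Disjoint (V₁ ∪ C) B) (hcov : ∀ x, x ∈ V₁ ∪ C ∨ x ∈ B) :
    G.matchedInto M V₁ \ V₁ = C ↔
      (∀ e ∈ M, G.bothIn (V₁ ∪ C) e ∨ G.bothIn B e) ∧ ∀ j ∈ C, ∃ e ∈ M, G.connectsTo V₁ j e := by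
  constructor
  · intro hT
    have hX : V₁ ∪ G.matchedInto M V₁ = V₁ ∪ C := by
      rw [← Finset.union_sdiff_self_eq_union, hT]
    have hclosed : ∀ e ∈ M, ∀ x, G.inc e x → x ∈ V₁ ∪ C → G.bothIn (V₁ ∪ C) e := by
      intro e he x hex hx
      rw [← hX] at hx ⊢
      exact hM.bothIn_union_matchedInto he hex hx
    refine ⟨fun e he => ?_, fun j hj => ?_⟩
    · by_cases h : G.fst e ∈ V₁ ∪ C
      · exact Or.inl (hclosed e he _ (Or.inl rfl) h)
      · have h' : G.snd e ∉ V₁ ∪ C := fun h' => h (hclosed e he _ (Or.inr rfl) h').1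
        exact Or.inr ⟨(hcov _).resolve_left h, (hcov _).resolve_left h'⟩
    · rw [← hT] at hj
      exact mem_matchedInto.1 (Finset.mem_sdiff.1 hj).1
  · rintro ⟨hsplit, hC⟩
    ext z
    simp only [Finset.mem_sdiff, mem_matchedInto]
    refine ⟨fun ⟨⟨e, he, hc⟩, hz⟩ => ?_, fun hz => ⟨hC z hz, Finset.disjoint_right.1 hV₁C hz⟩⟩
    have hzA : z ∈ V₁ ∪ C := by
      rcases hc with ⟨h, rfl⟩ | ⟨h, rfl⟩
      · exact (bothIn_of_inc hAB (hsplit e he) (Finset.mem_union_left C h) (Or.inl rfl)).2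
      · exact (bothIn_of_inc hAB (hsplit e he) (Finset.mem_union_left C h) (Or.inr rfl)).1
    exact (Finset.mem_union.1 hzA).resolve_left hz

lemma IsPM.forall_connectsTo_iff_forall_not_bothIn (hM : G.IsPM M) (hV₁C : Disjoint V₁ C)
    (hAB : Disjoint (V₁ ∪ C) B) (hsplit : ∀ e ∈ M, G.bothIn (V₁ ∪ C) e ∨ G.bothIn B e) :
    (∀ j ∈ C, ∃ e ∈ M, G.connectsTo V₁ j e) ↔ ∀ e ∈ M, ¬ G.bothIn C e := by
  constructor
  · rintro hC e he ⟨h₁, h₂⟩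
    have := hM.connectsTo_of_mem_matchedInto he (Or.inl rfl) (mem_matchedInto.2 (hC _ h₁))
    exact Finset.disjoint_left.1 hV₁C (connectsTo_fst_iff.1 this) h₂
  · intro hno j hj
    obtain ⟨e, ⟨he, hje⟩, -⟩ := hM.2 j (Finset.mem_univ j)
    have hA := bothIn_of_inc hAB (hsplit e he) (Finset.mem_union_right V₁ hj) hje
    refine ⟨e, he, ?_⟩
    rcases hje with rfl | rfl
    · exact connectsTo_fst_iff.2 ((Finset.mem_union.1 hA.2).resolve_right fun h => hno e he ⟨hj, h⟩)
    · exact connectsTo_snd_iff.2 ((Finset.mem_union.1 hA.1).resolve_right fun h => hno e he ⟨h, hj⟩)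

lemma IsPM.matchedInto_sdiff_eq_singleton_iff (hM : G.IsPM M) {a : V} (ha : a ∉ V₁)
    (hAB : Disjoint (insert a V₁) B) (hcov : ∀ x, x ∈ insert a V₁ ∨ x ∈ B) :
    G.matchedInto M V₁ \ V₁ = {a} ↔
      (∀ e ∈ M, G.bothIn (insert a V₁) e ∨ G.bothIn B e) ∧ ∃ e ∈ M, G.connectsTo V₁ a e := by
  simpa using hM.matchedInto_sdiff_eq_iff (C := {a}) (Finset.disjoint_singleton_right.2 ha)
    (by rwa [Finset.union_singleton]) (by simpa using hcov)

lemma sum_isPM_matchedInto_sdiff_eq (hV₁C : Disjoint V₁ C) (hAB : Disjoint (V₁ ∪ C) B)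
    (hcov : ∀ x, x ∈ V₁ ∪ C ∨ x ∈ B) (vc : V → ℕ) :
    ∑ M ∈ Finset.univ.filter (fun M : Finset G.E =>
        (G.IsPM M ∧ G.Induces M vc) ∧ G.matchedInto M V₁ \ V₁ = C), ∏ e ∈ M, G.w e =
      (∑ M ∈ Finset.univ.filter (fun M : Finset G.E => G.IsPMOn (V₁ ∪ C) M ∧ G.Induces M vc ∧
        ∀ e ∈ M, ¬ G.bothIn C e), ∏ e ∈ M, G.w e) * G.wcolOn B vc := by
  have hU : V₁ ∪ C ∪ B = Finset.univ :=
    Finset.eq_univ_of_forall fun x => Finset.mem_union.2 (hcov x)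
  rw [← sum_isPMOn_union hAB (fun e => ¬ G.bothIn C e) (fun e hB hC =>
    Finset.disjoint_left.1 hAB (Finset.mem_union_right V₁ hC.1) hB.1) vc, hU]
  refine Finset.sum_congr (Finset.filter_congr fun M _ => ?_) fun _ _ => rfl
  constructor
  · rintro ⟨⟨hM, hind⟩, hT⟩
    obtain ⟨hsplit, hC⟩ := (hM.matchedInto_sdiff_eq_iff hV₁C hAB hcov).1 hT
    exact ⟨hM, hind, hsplit, (hM.forall_connectsTo_iff_forall_not_bothIn hV₁C hAB hsplit).1 hC⟩
  · rintro ⟨hM, hind, hsplit, hno⟩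
    have hM : G.IsPM M := hM
    exact ⟨⟨hM, hind⟩, (hM.matchedInto_sdiff_eq_iff hV₁C hAB hcov).2
      ⟨hsplit, (hM.forall_connectsTo_iff_forall_not_bothIn hV₁C hAB hsplit).2 hno⟩⟩

lemma sum_isPM_matchedInto_sdiff_eq_singleton {a : V} (ha : a ∉ V₁)
    (hAB : Disjoint (insert a V₁) B) (hcov : ∀ x, x ∈ insert a V₁ ∨ x ∈ B) (vc : V → ℕ) :
    ∑ M ∈ Finset.univ.filter (fun M : Finset G.E =>
        (G.IsPM M ∧ G.Induces M vc) ∧ G.matchedInto M V₁ \ V₁ = {a}), ∏ e ∈ M, G.w e =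
      G.wcolOn (insert a V₁) vc * G.wcolOn B vc := by
  rw [sum_isPM_matchedInto_sdiff_eq (Finset.disjoint_singleton_right.2 ha)
    (by rwa [Finset.union_singleton]) (by simpa using hcov), Finset.union_singleton]
  simp only [not_bothIn_singleton, not_false_eq_true, implies_true, and_true, wcolOn]

end Cut

lemma IsPM.exists_matchedInto_sdiff_eq (hM : G.IsPM M) {V₁ V₂ : Finset V} {a b c : V}
    (hcover : ∀ x : V, x ∈ V₁ ∨ x ∈ V₂ ∨ x = a ∨ x = b ∨ x = c)
    (hsep : ∀ e : G.E, ¬ (G.fst e ∈ V₁ ∧ G.snd e ∈ V₂) ∧ ¬ (G.fst e ∈ V₂ ∧ G.snd e ∈ V₁))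
    (hodd : Odd V₁.card) :
    ∃ t, G.matchedInto M V₁ \ V₁ = (![{a, b, c}, {a}, {b}, {c}] : Fin 4 → Finset V) t := by
  have hsub : G.matchedInto M V₁ \ V₁ ⊆ {a, b, c} := fun z hz => by
    obtain ⟨hz, hzV₁⟩ := Finset.mem_sdiff.1 hz
    have hzV₂ := Finset.disjoint_left.1 (disjoint_matchedInto M hsep) hz
    rcases hcover z with h | h | rfl | rfl | rfl <;> simp_all
  rcases Finset.eq_triple_or_eq_singleton_of_odd_card hsub (hM.odd_card_matchedInto_sdiff hodd)
    with h | h | h | h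
  exacts [⟨0, h⟩, ⟨1, h⟩, ⟨2, h⟩, ⟨3, h⟩]

end EMG

theorem stmt15_general {V : Type} [Fintype V] [DecidableEq V] (G : EMG V)
    (u₁ u₂ u₃ : V) (h12 : u₁ ≠ u₂) (h13 : u₁ ≠ u₃) (h23 : u₂ ≠ u₃)
    (V₁ V₂ : Finset V)
    (hd12 : Disjoint V₁ V₂)
    (hu1 : u₁ ∉ V₁ ∧ u₁ ∉ V₂) (hu2 : u₂ ∉ V₁ ∧ u₂ ∉ V₂) (hu3 : u₃ ∉ V₁ ∧ u₃ ∉ V₂)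
    (hcover : ∀ x : V, x ∈ V₁ ∨ x ∈ V₂ ∨ x = u₁ ∨ x = u₂ ∨ x = u₃)
    (hsep : ∀ e : G.E,
      ¬ (G.fst e ∈ V₁ ∧ G.snd e ∈ V₂) ∧ ¬ (G.fst e ∈ V₂ ∧ G.snd e ∈ V₁))
    (hodd : Odd V₁.card) :
    (∀ M : Finset G.E, G.IsPM M →
      ∃! t : Fin 4,
        ![ (∀ e ∈ M, G.bothIn (V₁ ∪ {u₁, u₂, u₃}) e ∨ G.bothIn V₂ e) ∧
             (∀ j ∈ ({u₁, u₂, u₃} : Finset V), ∃ e ∈ M, G.connectsTo V₁ j e),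
           (∀ e ∈ M, G.bothIn (insert u₁ V₁) e ∨ G.bothIn (V₂ ∪ {u₂, u₃}) e) ∧
             (∃ e ∈ M, G.connectsTo V₁ u₁ e),
           (∀ e ∈ M, G.bothIn (insert u₂ V₁) e ∨ G.bothIn (V₂ ∪ {u₁, u₃}) e) ∧
             (∃ e ∈ M, G.connectsTo V₁ u₂ e),
           (∀ e ∈ M, G.bothIn (insert u₃ V₁) e ∨ G.bothIn (V₂ ∪ {u₁, u₂}) e) ∧
             (∃ e ∈ M, G.connectsTo V₁ u₃ e) ] t) ∧
    (∀ vc : V → ℕ,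
      G.wcol vc =
        (∑ M ∈ Finset.univ.filter (fun M : Finset G.E =>
            G.IsPMOn (V₁ ∪ {u₁, u₂, u₃}) M ∧ G.Induces M vc ∧
            ∀ e ∈ M, ¬ G.bothIn {u₁, u₂, u₃} e), ∏ e ∈ M, G.w e) *
          G.wcolOn V₂ vc
        + G.wcolOn (insert u₁ V₁) vc * G.wcolOn (V₂ ∪ {u₂, u₃}) vc
        + G.wcolOn (insert u₂ V₁) vc * G.wcolOn (V₂ ∪ {u₁, u₃}) vc
        + G.wcolOn (insert u₃ V₁) vc * G.wcolOn (V₂ ∪ {u₁, u₂}) vc) := by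
  have h₀ : Disjoint V₁ {u₁, u₂, u₃} ∧ Disjoint (V₁ ∪ {u₁, u₂, u₃}) V₂ ∧
      ∀ x, x ∈ V₁ ∪ {u₁, u₂, u₃} ∨ x ∈ V₂ := by grind [Finset.disjoint_left]
  have h₁ : Disjoint (insert u₁ V₁) (V₂ ∪ {u₂, u₃}) ∧
      ∀ x, x ∈ insert u₁ V₁ ∨ x ∈ V₂ ∪ {u₂, u₃} := by grind [Finset.disjoint_left]
  have h₂ : Disjoint (insert u₂ V₁) (V₂ ∪ {u₁, u₃}) ∧
      ∀ x, x ∈ insert u₂ V₁ ∨ x ∈ V₂ ∪ {u₁, u₃} := by grind [Finset.disjoint_left]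
  have h₃ : Disjoint (insert u₃ V₁) (V₂ ∪ {u₁, u₂}) ∧
      ∀ x, x ∈ insert u₃ V₁ ∨ x ∈ V₂ ∪ {u₁, u₂} := by grind [Finset.disjoint_left]
  set C : Fin 4 → Finset V := ![{u₁, u₂, u₃}, {u₁}, {u₂}, {u₃}]
  have hinj : C.Injective := Finset.injective_triple_singletons h12 h13 h23
  have htype : ∀ M, G.IsPM M → ∃ t, G.matchedInto M V₁ \ V₁ = C t :=
    fun M hM => hM.exists_matchedInto_sdiff_eq hcover hsep hodd
  refine ⟨fun M hM => ?_, fun vc => ?_⟩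
  · obtain ⟨t, ht⟩ := htype M hM
    refine (existsUnique_congr (q := fun t => G.matchedInto M V₁ \ V₁ = C t) fun t => ?_).2
      ⟨t, ht, fun t' ht' => hinj (ht'.symm.trans ht)⟩
    fin_cases t
    exacts [(hM.matchedInto_sdiff_eq_iff h₀.1 h₀.2.1 h₀.2.2).symm,
      (hM.matchedInto_sdiff_eq_singleton_iff hu1.1 h₁.1 h₁.2).symm,
      (hM.matchedInto_sdiff_eq_singleton_iff hu2.1 h₂.1 h₂.2).symm,
      (hM.matchedInto_sdiff_eq_singleton_iff hu3.1 h₃.1 h₃.2).symm]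
  · rw [EMG.wcol, EMG.wcolOn, ← Finset.sum_fiberwise_of_injective hinj
      (g := fun M => G.matchedInto M V₁ \ V₁) fun M hM => htype M (Finset.mem_filter.1 hM).2.1,
      Fin.sum_univ_four]
    simp only [Finset.filter_filter]
    refine congrArg₂ (· + ·) (congrArg₂ (· + ·) (congrArg₂ (· + ·) ?_ ?_) ?_) ?_
    exacts [EMG.sum_isPM_matchedInto_sdiff_eq h₀.1 h₀.2.1 h₀.2.2 vc,
      EMG.sum_isPM_matchedInto_sdiff_eq_singleton hu1.1 h₁.1 h₁.2 vc,
      EMG.sum_isPM_matchedInto_sdiff_eq_singleton hu2.1 h₂.1 h₂.2 vc,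
      EMG.sum_isPM_matchedInto_sdiff_eq_singleton hu3.1 h₃.1 h₃.2 vc]

/-- With a 3-cut `S = {u₁,u₂,u₃}` separating `V₁` (odd) from `V₂`, every
perfect matching of `G` is of exactly one of four types (all of `S` matched
into `V₁`, or exactly `uᵢ` matched into `V₁` for `i = 1,2,3`), and
consequently the weight of any vertex colouring decomposes as
`w(vc) = Σᵢ Wᵢ(vc)·Wᵢ'(vc)`. -/
theorem stmt15 {V : Type} [Fintype V] [DecidableEq V] (G : EMG V)
    (u₁ u₂ u₃ : V) (h12 : u₁ ≠ u₂) (h13 : u₁ ≠ u₃) (h23 : u₂ ≠ u₃)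
    (V₁ V₂ : Finset V)
    (h1ne : V₁.Nonempty)
    (hd12 : Disjoint V₁ V₂)
    (hu1 : u₁ ∉ V₁ ∧ u₁ ∉ V₂) (hu2 : u₂ ∉ V₁ ∧ u₂ ∉ V₂) (hu3 : u₃ ∉ V₁ ∧ u₃ ∉ V₂)
    (hcover : ∀ x : V, x ∈ V₁ ∨ x ∈ V₂ ∨ x = u₁ ∨ x = u₂ ∨ x = u₃)
    (hsep : ∀ e : G.E,
      ¬ (G.fst e ∈ V₁ ∧ G.snd e ∈ V₂) ∧ ¬ (G.fst e ∈ V₂ ∧ G.snd e ∈ V₁))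
    (hodd : Odd V₁.card) :
    (∀ M : Finset G.E, G.IsPM M →
      ∃! t : Fin 4,
        ![ (∀ e ∈ M, G.bothIn (V₁ ∪ {u₁, u₂, u₃}) e ∨ G.bothIn V₂ e) ∧
             (∀ j ∈ ({u₁, u₂, u₃} : Finset V), ∃ e ∈ M, G.connectsTo V₁ j e),
           (∀ e ∈ M, G.bothIn (insert u₁ V₁) e ∨ G.bothIn (V₂ ∪ {u₂, u₃}) e) ∧
             (∃ e ∈ M, G.connectsTo V₁ u₁ e),
           (∀ e ∈ M, G.bothIn (insert u₂ V₁) e ∨ G.bothIn (V₂ ∪ {u₁, u₃}) e) ∧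
             (∃ e ∈ M, G.connectsTo V₁ u₂ e),
           (∀ e ∈ M, G.bothIn (insert u₃ V₁) e ∨ G.bothIn (V₂ ∪ {u₁, u₂}) e) ∧
             (∃ e ∈ M, G.connectsTo V₁ u₃ e) ] t) ∧
    (∀ vc : V → ℕ,
      G.wcol vc =
        (∑ M ∈ Finset.univ.filter (fun M : Finset G.E =>
            G.IsPMOn (V₁ ∪ {u₁, u₂, u₃}) M ∧ G.Induces M vc ∧
            ∀ e ∈ M, ¬ G.bothIn {u₁, u₂, u₃} e), ∏ e ∈ M, G.w e) *
          G.wcolOn V₂ vc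
        + G.wcolOn (insert u₁ V₁) vc * G.wcolOn (V₂ ∪ {u₂, u₃}) vc
        + G.wcolOn (insert u₂ V₁) vc * G.wcolOn (V₂ ∪ {u₁, u₃}) vc
        + G.wcolOn (insert u₃ V₁) vc * G.wcolOn (V₂ ∪ {u₁, u₂}) vc) :=
  stmt15_general G u₁ u₂ u₃ h12 h13 h23 V₁ V₂ hd12 hu1 hu2 hu3 hcover hsep hodd
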